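/- arXiv:q-alg/9705016 — 3 statements merged into one kernel-verified Lean document; each statement's English description precedes it below -/
import Mathlib

section
/- Let ρ be a representation of the group G on a finite-dimensional k-vector space W, let σ be a representation of H on a k-vector space V, and suppose there exist H-equivariant k-linear maps ι : V → W and π : W → V (where H acts on W by restriction of ρ) with π ∘ ι = id_V, i.e., V is an H-module direct summand of the restriction of W. Then the induced section space Ind(V) is a finitely generated projective A-module. -/
set_option synthInstance.maxHeartbeats 1000000
set_option maxHeartbeats 1000000

/-- The algebra `A` of right `H`-invariant `k`-valued functions on `G`
(functions on the homogeneous space `G/H`), under pointwise operations. -/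
def invariantAlgebra (k : Type*) [Field k] {G : Type*} [Group G] (H : Subgroup G) :
    Subalgebra k (G → k) where
  carrier := {a | ∀ (g : G) (h : H), a (g * h) = a g}
  mul_mem' := fun {a b} ha hb g h => by
    show a (g * h) * b (g * h) = a g * b g
    rw [ha g h, hb g h]
  one_mem' := fun g h => rfl
  add_mem' := fun {a b} ha hb g h => by
    show a (g * h) + b (g * h) = a g + b g
    rw [ha g h, hb g h]
  zero_mem' := fun g h => rfl
  algebraMap_mem' := fun c g h => rfl

/-- The induced section space `Ind(V)` of an `H`-representation `σ`, as a module over the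
algebra `A` of right `H`-invariant functions (acting pointwise). -/
def inducedSubmodule {k G V : Type*} [Field k] [Group G] [AddCommGroup V] [Module k V]
    (H : Subgroup G) (σ : Representation k H V) :
    Submodule ↥(invariantAlgebra k H) (G → V) where
  carrier := {f | ∀ (g : G) (h : H), f (g * h) = σ h⁻¹ (f g)}
  add_mem' := fun {f₁ f₂} hf₁ hf₂ g h => by
    show f₁ (g * h) + f₂ (g * h) = σ h⁻¹ (f₁ g + f₂ g)
    rw [hf₁ g h, hf₂ g h, map_add]
  zero_mem' := fun g h => by
    show (0 : V) = σ h⁻¹ 0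
    rw [map_zero]
  smul_mem' := fun c f hf g h => by
    show (c : G → k) (g * h) • f (g * h) = σ h⁻¹ ((c : G → k) g • f g)
    rw [c.2 g h, hf g h, map_smul]

section Aux

variable {k G W V : Type*} [Field k] [Group G]
  [AddCommGroup W] [Module k W] [AddCommGroup V] [Module k V]
  {H : Subgroup G} {ρ : Representation k G W} {σ : Representation k H V}

/-- The map `Ind(V) → Aⁿ` given by `f ↦ (i ↦ g ↦ b.repr (ρ g (ι (f g))) i)`. -/
noncomputable def indToFree (σ : Representation k H V)
    (ρ : Representation k G W) (ι₀ : V →ₗ[k] W)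
    (hι : ∀ (h : H) (v : V), ι₀ (σ h v) = ρ h (ι₀ v))
    {n : Type*} [Fintype n] (b : Module.Basis n k W) :
    inducedSubmodule H σ →ₗ[↥(invariantAlgebra k H)] (n → ↥(invariantAlgebra k H)) where
  toFun f i := ⟨fun g => b.repr (ρ g (ι₀ (f.1 g))) i, by
    intro g h
    have h1 : f.1 (g * h) = σ h⁻¹ (f.1 g) := f.2 g h
    have h2 : ι₀ (σ h⁻¹ (f.1 g)) = ρ ((h⁻¹ : H) : G) (ι₀ (f.1 g)) := hι h⁻¹ _
    have h3 : ρ (g * (h : G)) (ρ ((h⁻¹ : H) : G) (ι₀ (f.1 g))) = ρ g (ι₀ (f.1 g)) := by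
      rw [← Module.End.mul_apply, ← map_mul]
      congr 2
      simp [mul_assoc]
    show b.repr (ρ (g * (h : G)) (ι₀ (f.1 (g * h)))) i = b.repr (ρ g (ι₀ (f.1 g))) i
    rw [h1, h2, h3]⟩
  map_add' f₁ f₂ := by
    ext i g
    simp
  map_smul' c f := by
    ext i g
    show b.repr (ρ g (ι₀ ((c : G → k) g • f.1 g))) i = (c : G → k) g * b.repr (ρ g (ι₀ (f.1 g))) i
    rw [map_smul, map_smul, map_smul]
    rfl

/-- The map `Aⁿ → Ind(V)` given by `a ↦ (g ↦ π (ρ g⁻¹ (∑ i, a i g • b i)))`. -/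
noncomputable def freeToInd (σ : Representation k H V)
    (ρ : Representation k G W) (π : W →ₗ[k] V)
    (hπ : ∀ (h : H) (w : W), π (ρ h w) = σ h (π w))
    {n : Type*} [Fintype n] (b : Module.Basis n k W) :
    (n → ↥(invariantAlgebra k H)) →ₗ[↥(invariantAlgebra k H)] inducedSubmodule H σ where
  toFun a := ⟨fun g => π (ρ g⁻¹ (∑ i, ((a i : G → k) g) • b i)), by
    intro g h
    have h1 : ∀ i, (a i : G → k) (g * h) = (a i : G → k) g := fun i => (a i).2 g h
    simp only [h1]
    have h2 : (g * (h : G))⁻¹ = ((h⁻¹ : H) : G) * g⁻¹ := by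
      simp
    rw [h2, map_mul, Module.End.mul_apply, hπ h⁻¹]⟩
  map_add' a b' := by
    ext g
    show π (ρ g⁻¹ (∑ i, ((a i : G → k) g + (b' i : G → k) g) • b i)) = _
    simp [add_smul, Finset.sum_add_distrib, map_add]
  map_smul' c a := by
    ext g
    show π (ρ g⁻¹ (∑ i, ((c : G → k) g * (a i : G → k) g) • b i))
        = (c : G → k) g • π (ρ g⁻¹ (∑ i, ((a i : G → k) g) • b i))
    rw [← map_smul, ← map_smul, Finset.smul_sum]
    simp [smul_smul]

end Aux

/-- If the `H`-representation `V` is an `H`-module direct summand of the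
restriction of a finite-dimensional `G`-representation `W` (witnessed by `H`-equivariant
linear maps `ι : V → W` and `π : W → V` with `π ∘ ι = id`), then the induced section space
`Ind(V)` is a finitely generated projective module over the algebra `A` of right
`H`-invariant functions. -/
theorem induced_module_finite_projective {k G W V : Type*} [Field k] [Group G]
    [AddCommGroup W] [Module k W] [FiniteDimensional k W] [AddCommGroup V] [Module k V]
    (H : Subgroup G) (ρ : Representation k G W) (σ : Representation k H V)
    (ι : V →ₗ[k] W) (π : W →ₗ[k] V)
    (hι : ∀ (h : H) (v : V), ι (σ h v) = ρ h (ι v))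
    (hπ : ∀ (h : H) (w : W), π (ρ h w) = σ h (π w))
    (hπι : π.comp ι = LinearMap.id) :
    Module.Finite ↥(invariantAlgebra k H) (inducedSubmodule H σ) ∧
    Module.Projective ↥(invariantAlgebra k H) (inducedSubmodule H σ) := by
  classical
  let b := Module.finBasis k W
  let F := indToFree σ ρ ι hι b
  let P := freeToInd σ ρ π hπ b
  have key : P.comp F = LinearMap.id := by
    refine LinearMap.ext fun f => Subtype.ext (funext fun g => ?_)
    show π (ρ g⁻¹ (∑ i, (b.repr (ρ g (ι (f.1 g))) i) • b i)) = f.1 g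
    rw [b.sum_repr, ← Module.End.mul_apply, ← map_mul, inv_mul_cancel, map_one,
      Module.End.one_apply]
    exact congrArg (fun φ : V →ₗ[k] V => φ (f.1 g)) hπι
  have hsurj : Function.Surjective P := fun m =>
    ⟨F m, congrArg (fun φ => φ m) key⟩
  exact ⟨Module.Finite.of_surjective P hsurj, Module.Projective.of_split F P key⟩
end

section
/- Let A be a bialgebra over a field k and suppose A decomposes as a direct sum of k-subspaces A = k·1_A ⊕ C, where C is a subcoalgebra of A, i.e., Δ(C) is contained in the image of C ⊗ C in A ⊗ A. Let ∫ : A → k be the k-linear functional determined by ∫(1_A) = 1 and ∫(c) = 0 for all c ∈ C. Then ∫ is a normalized two-sided integral (a Haar measure) on A: for every x ∈ A one has (id_A ⊗ ∫)(Δx) = ∫(x)·1_A and (∫ ⊗ id_A)(Δx) = ∫(x)·1_A, and ∫(1_A) = 1. -/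
/-!
Both sides of each identity are linear in `x`, so it suffices to compare them on `k ∙ 1` and on
`C`. On `1` they agree because `1` is group-like, `Δ 1 = 1 ⊗ 1`. On `C` both vanish: `Δ c` lies
in the image of `C ⊗ C`, and `I` kills whichever tensor factor it is applied to.
-/

section

open TensorProduct LinearMap Coalgebra

variable {R A : Type*} [CommSemiring R] [AddCommMonoid A] [Module R A] [Coalgebra R A]
  {I : A →ₗ[R] R}

theorem rid_lTensor_comul_eq_zero {C : Submodule R A} (hIC : ∀ c ∈ C, I c = 0) {c : A}
    (hc : comul c ∈ range (map C.subtype C.subtype)) :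
    TensorProduct.rid R A (I.lTensor A (comul c)) = 0 := by
  obtain ⟨z, hz⟩ := hc
  have : I ∘ₗ C.subtype = 0 := LinearMap.ext fun c ↦ hIC c c.2
  rw [← hz, lTensor_map, this, map_zero_right, LinearMap.zero_apply, map_zero]

theorem lid_rTensor_comul_eq_zero {C : Submodule R A} (hIC : ∀ c ∈ C, I c = 0) {c : A}
    (hc : comul c ∈ range (map C.subtype C.subtype)) :
    TensorProduct.lid R A (I.rTensor A (comul c)) = 0 := by
  obtain ⟨z, hz⟩ := hc
  have : I ∘ₗ C.subtype = 0 := LinearMap.ext fun c ↦ hIC c c.2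
  rw [← hz, rTensor_map, this, map_zero_left, LinearMap.zero_apply, map_zero]

theorem rid_lTensor_comul_eq_smul_of_codisjoint {g : A} (hg : IsGroupLikeElem R g)
    {C : Submodule R A} (hgC : Codisjoint (R ∙ g) C)
    (hC : ∀ c ∈ C, comul c ∈ range (map C.subtype C.subtype)) (hIC : ∀ c ∈ C, I c = 0)
    (x : A) : TensorProduct.rid R A (I.lTensor A (comul x)) = I x • g := by
  suffices (TensorProduct.rid R A).toLinearMap ∘ₗ I.lTensor A ∘ₗ comul = I.smulRight g from
    LinearMap.congr_fun this x
  refine ext_on_codisjoint hgC (fun x hx ↦ ?_) fun c hc ↦ ?_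
  · obtain ⟨a, rfl⟩ := Submodule.mem_span_singleton.mp hx
    simp [hg.comul_eq_tmul_self]
  · simp [rid_lTensor_comul_eq_zero hIC (hC c hc), hIC c hc]

theorem lid_rTensor_comul_eq_smul_of_codisjoint {g : A} (hg : IsGroupLikeElem R g)
    {C : Submodule R A} (hgC : Codisjoint (R ∙ g) C)
    (hC : ∀ c ∈ C, comul c ∈ range (map C.subtype C.subtype)) (hIC : ∀ c ∈ C, I c = 0)
    (x : A) : TensorProduct.lid R A (I.rTensor A (comul x)) = I x • g := by
  suffices (TensorProduct.lid R A).toLinearMap ∘ₗ I.rTensor A ∘ₗ comul = I.smulRight g from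
    LinearMap.congr_fun this x
  refine ext_on_codisjoint hgC (fun x hx ↦ ?_) fun c hc ↦ ?_
  · obtain ⟨a, rfl⟩ := Submodule.mem_span_singleton.mp hx
    simp [hg.comul_eq_tmul_self]
  · simp [lid_rTensor_comul_eq_zero hIC (hC c hc), hIC c hc]

end

/-- Let `A` be a bialgebra over `k` decomposing as `A = k·1_A ⊕ C` with `C` a
subcoalgebra (`Δ(C) ⊆ im(C ⊗ C → A ⊗ A)`), and let `∫ : A → k` be the linear functional with
`∫(1_A) = 1` and `∫|_C = 0`. Then `∫` is a normalized two-sided integral (Haar measure) on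
`A`: `(id ⊗ ∫)(Δ x) = ∫(x) · 1_A` and `(∫ ⊗ id)(Δ x) = ∫(x) · 1_A` for all `x ∈ A`, and
`∫(1_A) = 1`. -/
theorem haar_measure_of_subcoalgebra_complement {k A : Type*} [Field k] [Semiring A]
    [Bialgebra k A] (C : Submodule k A)
    (hcompl : IsCompl (k ∙ (1 : A)) C)
    (hC : ∀ c ∈ C, Coalgebra.comul (R := k) c ∈
      LinearMap.range (TensorProduct.map C.subtype C.subtype))
    (I : A →ₗ[k] k) (hI1 : I 1 = 1) (hIC : ∀ c ∈ C, I c = 0) :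
    (∀ x : A, TensorProduct.rid k A ((LinearMap.lTensor A I) (Coalgebra.comul (R := k) x))
      = I x • (1 : A)) ∧
    (∀ x : A, TensorProduct.lid k A ((LinearMap.rTensor A I) (Coalgebra.comul (R := k) x))
      = I x • (1 : A)) ∧
    I 1 = 1 :=
  ⟨rid_lTensor_comul_eq_smul_of_codisjoint .one hcompl.codisjoint hC hIC,
    lid_rTensor_comul_eq_smul_of_codisjoint .one hcompl.codisjoint hC hIC, hI1⟩
end

section
/- Let k be an algebraically closed field, A an associative unital k-algebra, and W₁, …, W_m pairwise non-isomorphic finite-dimensional simple left A-modules. For each l choose a k-basis w₁^{(l)}, …, w_{d_l}^{(l)} of W_l and define the matrix coefficient functionals t^{(l)}_{ij} : A → k by x·w_i^{(l)} = Σ_j t^{(l)}_{ji}(x)·w_j^{(l)} for all x ∈ A. Then the whole family { t^{(l)}_{ij} | 1 ≤ l ≤ m, 1 ≤ i, j ≤ d_l } is linearly independent in the dual space A* = Hom_k(A, k). -/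
/-!
By Schur's lemma, a family of `k`-linear endomorphisms of the `W l`, acting componentwise on
`∏ l, W l`, commutes with every `A`-endomorphism of this semisimple module, so the Jacobson
density theorem makes `A → ∏ l, End k (W l)` surjective. The matrix coefficients are the
coordinate functionals of the product of the matrix-unit bases pulled back along this map,
and pulling back along a surjection preserves linear independence.
-/

open Module

section

variable {k A : Type*} [Field k] [IsAlgClosed k] [Ring A] [Algebra k A]
  {ι : Type*} {W : ι → Type*} [∀ l, AddCommGroup (W l)] [∀ l, Module k (W l)]
  [∀ l, Module A (W l)] [∀ l, IsScalarTower k A (W l)] [∀ l, FiniteDimensional k (W l)]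
  [∀ l, IsSimpleModule A (W l)]

theorem apply_comm_of_pairwise_isEmpty_linearEquiv
    (hpair : ∀ l l' : ι, l ≠ l' → IsEmpty (W l ≃ₗ[A] W l'))
    (φ : ∀ l, End k (W l)) {l l' : ι} (f : W l' →ₗ[A] W l) (w : W l') :
    φ l (f w) = f (φ l' w) := by
  rcases eq_or_ne l' l with rfl | hne
  · obtain ⟨c, rfl⟩ := (IsSimpleModule.algebraMap_end_bijective_of_isAlgClosed k).2 f
    simp [algebraMap_end_apply]
  · obtain hf | rfl := f.bijective_or_eq_zero
    · exact ((hpair l' l hne).false (.ofBijective f hf)).elim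
    · simp

variable [Fintype ι] [DecidableEq ι]

theorem surjective_pi_lsmul_of_pairwise_isEmpty_linearEquiv
    (hpair : ∀ l l' : ι, l ≠ l' → IsEmpty (W l ≃ₗ[A] W l')) :
    Function.Surjective
      (LinearMap.pi fun l ↦ (Algebra.lsmul k (A := A) k (W l)).toLinearMap) := by
  intro φ
  have : Module.Finite (End A (∀ l, W l)) (∀ l, W l) := .of_restrictScalars_finite k _ _
  let F : End (End A (∀ l, W l)) (∀ l, W l) :=
    { toFun x l := φ l (x l)
      map_add' x y := by ext l; simp
      map_smul' g x := by
        ext l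
        conv_lhs => rw [← Finset.univ_sum_single x]
        conv_rhs => rw [← Finset.univ_sum_single (fun l ↦ φ l (x l))]
        simp only [End.smul_def, map_sum, Finset.sum_apply, RingHom.id_apply]
        refine Finset.sum_congr rfl fun l' _ ↦ ?_
        exact apply_comm_of_pairwise_isEmpty_linearEquiv hpair φ
          (LinearMap.proj l ∘ₗ g ∘ₗ LinearMap.single A W l') (x l') }
  obtain ⟨a, ha⟩ := Module.Finite.toModuleEnd_moduleEnd_surjective F
  refine ⟨a, funext fun l ↦ LinearMap.ext fun w ↦ ?_⟩
  simpa [F] using congr($ha (Pi.single l w) l)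

end

/-- Let `k` be an algebraically closed field, `A` a unital `k`-algebra and
`W₁, …, W_m` pairwise non-isomorphic finite-dimensional simple left `A`-modules with chosen
`k`-bases. Then the whole family of matrix coefficient functionals
`t^{(l)}_{ij}(x) = ((b l).repr (x • b l j)) i` is linearly independent in the dual space
`A* = Hom_k(A, k)`. -/
theorem matrix_coefficients_linearIndependent {k A : Type*} [Field k] [IsAlgClosed k]
    [Ring A] [Algebra k A] {m : ℕ} (W : Fin m → Type*)
    [∀ l, AddCommGroup (W l)] [∀ l, Module k (W l)] [∀ l, Module A (W l)]
    [∀ l, IsScalarTower k A (W l)] [∀ l, FiniteDimensional k (W l)]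
    [∀ l, IsSimpleModule A (W l)]
    (hpair : ∀ l l' : Fin m, l ≠ l' → IsEmpty ((W l) ≃ₗ[A] (W l')))
    (d : Fin m → ℕ) (b : ∀ l, Module.Basis (Fin (d l)) k (W l))
    (T : (Σ l : Fin m, Fin (d l) × Fin (d l)) → Module.Dual k A)
    (hT : ∀ (p : Σ l : Fin m, Fin (d l) × Fin (d l)) (x : A),
      T p x = (b p.1).repr (x • b p.1 p.2.2) p.2.1) :
    LinearIndependent k T := by
  let ρ : A →ₗ[k] ∀ l, End k (W l) :=
    LinearMap.pi fun l ↦ (Algebra.lsmul k (A := A) k (W l)).toLinearMap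
  let B := Pi.basis fun l ↦ (b l).linearMap (b l)
  have hTρ : T = ρ.dualMap ∘ B.coord := by
    ext p x
    simp [hT, ρ, B, Matrix.stdBasis, LinearMap.toMatrix_apply]
  rw [hTρ]
  exact B.linearIndependent_coord.map' _ <| LinearMap.ker_eq_bot.mpr <|
    LinearMap.dualMap_injective_of_surjective <|
      surjective_pi_lsmul_of_pairwise_isEmpty_linearEquiv hpair
end
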